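/- For the wetting flow v = -ξ₀⁻¹γ(κ - (θ₀+θ_L)/L)n, v₀ = -ξ₁⁻¹γ(cosθ₀-cosθ_Y), v_L = ξ₁⁻¹γ(cosθ_L-cosθ_Y), the energy rate Ė = γ[∫κ v_n + v₀(cosθ₀-cosθ_Y) - v_L(cosθ_L-cosθ_Y)] equals -γ²[ξ₀⁻¹∫(κ-(θ₀+θ_L)/L)² + ξ₁⁻¹(cosθ₀-cosθ_Y)² + ξ₁⁻¹(cosθ_L-cosθ_Y)²] ≤ 0. -/

import Mathlib

/-! Gauss–Bonnet says that `(θ₀ + θL) / L` is the mean curvature, so `κ - (θ₀ + θL) / L` has mean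
zero and pairing it with `κ` gives its squared `L²` norm. Each of the three velocities is then minus
a positive multiple of its own driving force, and the energy rate is minus a sum of squares. -/

open Set

namespace MeasureTheory

variable {α : Type*} [MeasurableSpace α] {μ : Measure α} [IsFiniteMeasure μ]

theorem integral_mul_sub_eq_integral_sub_sq {f : α → ℝ} (hf : MemLp f 2 μ) {c : ℝ}
    (hmean : ∫ x, f x ∂μ = c * μ.real univ) :
    ∫ x, f x * (f x - c) ∂μ = ∫ x, (f x - c) ^ 2 ∂μ := by
  have hf₁ : Integrable f μ := hf.integrable one_le_two
  have hsq : Integrable (fun x => (f x - c) ^ 2) μ := (hf.sub (memLp_const c)).integrable_sq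
  have hlin : Integrable (fun x => c * (f x - c)) μ := (hf₁.sub (integrable_const c)).const_mul c
  have hlin_zero : ∫ x, c * (f x - c) ∂μ = 0 := by
    rw [integral_const_mul, integral_sub hf₁ (integrable_const c), hmean, integral_const,
      smul_eq_mul, mul_comm (μ.real univ), sub_self, mul_zero]
  calc ∫ x, f x * (f x - c) ∂μ = ∫ x, ((f x - c) ^ 2 + c * (f x - c)) ∂μ := by
        congr 1; ext x; ring
    _ = ∫ x, (f x - c) ^ 2 ∂μ := by rw [integral_add hsq hlin, hlin_zero, add_zero]

end MeasureTheory

open MeasureTheory Real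

theorem stmt16_general {Γ : Type*} [MeasurableSpace Γ] (μ : Measure Γ) (L : ℝ) (hL : 0 < L)
    (hμ : μ Set.univ = ENNReal.ofReal L)
    (κ : Γ → ℝ) (hκ : MemLp κ 2 μ)
    (θ₀ θL θY γ ξ₀ ξ₁ : ℝ) (hξ₀ : 0 < ξ₀) (hξ₁ : 0 < ξ₁)
    (hGB : ∫ x, κ x ∂μ = θ₀ + θL)
    (vn : Γ → ℝ) (hvn : ∀ x, vn x = -(ξ₀⁻¹ * γ * (κ x - (θ₀ + θL) / L)))
    (v₀ vL : ℝ)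
    (hv₀ : v₀ = -(ξ₁⁻¹ * γ * (cos θ₀ - cos θY)))
    (hvL : vL = ξ₁⁻¹ * γ * (cos θL - cos θY)) :
    γ * ((∫ x, κ x * vn x ∂μ) + v₀ * (cos θ₀ - cos θY) - vL * (cos θL - cos θY)) =
        -(γ ^ 2 * (ξ₀⁻¹ * (∫ x, (κ x - (θ₀ + θL) / L) ^ 2 ∂μ) +
          ξ₁⁻¹ * (cos θ₀ - cos θY) ^ 2 + ξ₁⁻¹ * (cos θL - cos θY) ^ 2)) ∧
      γ * ((∫ x, κ x * vn x ∂μ) + v₀ * (cos θ₀ - cos θY) - vL * (cos θL - cos θY)) ≤ 0 := by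
  have : IsFiniteMeasure μ := ⟨by rw [hμ]; exact ENNReal.ofReal_lt_top⟩
  have hmean : ∫ x, κ x ∂μ = (θ₀ + θL) / L * μ.real univ := by
    rw [measureReal_def, hμ, ENNReal.toReal_ofReal hL.le, div_mul_cancel₀ _ hL.ne', hGB]
  have hbulk : ∫ x, κ x * vn x ∂μ = -(ξ₀⁻¹ * γ) * ∫ x, (κ x - (θ₀ + θL) / L) ^ 2 ∂μ := by
    have hpointwise : ∀ x, κ x * vn x = -(ξ₀⁻¹ * γ) * (κ x * (κ x - (θ₀ + θL) / L)) := by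
      intro x; rw [hvn x]; ring
    rw [integral_congr_ae (ae_of_all μ hpointwise), integral_const_mul,
      integral_mul_sub_eq_integral_sub_sq hκ hmean]
  have hrate : γ * ((∫ x, κ x * vn x ∂μ) + v₀ * (cos θ₀ - cos θY) - vL * (cos θL - cos θY)) =
      -(γ ^ 2 * (ξ₀⁻¹ * (∫ x, (κ x - (θ₀ + θL) / L) ^ 2 ∂μ) +
        ξ₁⁻¹ * (cos θ₀ - cos θY) ^ 2 + ξ₁⁻¹ * (cos θL - cos θY) ^ 2)) := by
    rw [hbulk, hv₀, hvL]; ring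
  have hdissipation : 0 ≤ ∫ x, (κ x - (θ₀ + θL) / L) ^ 2 ∂μ :=
    integral_nonneg fun x => sq_nonneg _
  refine ⟨hrate, hrate ▸ neg_nonpos.2 ?_⟩
  positivity

theorem stmt16 {Γ : Type*} [MeasurableSpace Γ] (μ : Measure Γ) (L : ℝ) (hL : 0 < L)
    (hμ : μ Set.univ = ENNReal.ofReal L)
    (κ : Γ → ℝ) (hκ : MemLp κ 2 μ)
    (θ₀ θL θY γ ξ₀ ξ₁ : ℝ) (hγ : 0 < γ) (hξ₀ : 0 < ξ₀) (hξ₁ : 0 < ξ₁)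
    (hGB : ∫ x, κ x ∂μ = θ₀ + θL)
    (vn : Γ → ℝ) (hvn : ∀ x, vn x = -(ξ₀⁻¹ * γ * (κ x - (θ₀ + θL) / L)))
    (v₀ vL : ℝ)
    (hv₀ : v₀ = -(ξ₁⁻¹ * γ * (cos θ₀ - cos θY)))
    (hvL : vL = ξ₁⁻¹ * γ * (cos θL - cos θY)) :
    γ * ((∫ x, κ x * vn x ∂μ) + v₀ * (cos θ₀ - cos θY) - vL * (cos θL - cos θY)) =
        -(γ ^ 2 * (ξ₀⁻¹ * (∫ x, (κ x - (θ₀ + θL) / L) ^ 2 ∂μ) +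
          ξ₁⁻¹ * (cos θ₀ - cos θY) ^ 2 + ξ₁⁻¹ * (cos θL - cos θY) ^ 2)) ∧
      γ * ((∫ x, κ x * vn x ∂μ) + v₀ * (cos θ₀ - cos θY) - vL * (cos θL - cos θY)) ≤ 0 :=
  stmt16_general μ L hL hμ κ hκ θ₀ θL θY γ ξ₀ ξ₁ hξ₀ hξ₁ hGB vn hvn v₀ vL hv₀ hvL
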